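/- arXiv:1803.09614 — 5 statements merged into one kernel-verified Lean document; each statement's English description precedes it below -/
import Mathlib

section
/- Let p and q be distinct primes and H a finite group. If the subgroup λ_q(λ_p(H)) is trivial, where λ_r(G) = [G,G]·G^r, then H is isomorphic to a semidirect product (Z/qZ)^n ⋊ (Z/pZ)^m for some n, m and some action of (Z/pZ)^m on (Z/qZ)^n. -/
/-!
The hypothesis says exactly that `N = λ_p(H)` is elementary abelian of exponent `q`; and
`H ⧸ N` is elementary abelian of exponent `p` for any `H`. Both are therefore vector spaces over
prime fields, and since `|N|` is a power of `q` while `[H : N]` is a power of `p`, Schur–Zassenhaus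
gives a complement `K ≅ H ⧸ N` of `N`, so that `H ≅ N ⋊ K`.
-/

/-- `lam r G = [G,G] G^r`, the subgroup generated by commutators and `r`-th powers. -/
def lam (r : ℕ) (G : Type*) [Group G] : Subgroup G :=
  commutator G ⊔ Subgroup.closure {x : G | ∃ g : G, x = g ^ r}

open Subgroup

section Lam

variable (r : ℕ) {G : Type*} [Group G]

theorem commutator_le_lam : commutator G ≤ lam r G := le_sup_left

theorem pow_mem_lam (g : G) : g ^ r ∈ lam r G :=
  mem_sup_right (subset_closure ⟨g, rfl⟩)

instance lam_normal : (lam r G).Normal := .of_commutator_le (G := G) (commutator_le_lam r)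

theorem lam_eq_bot_iff :
    lam r G = ⊥ ↔ (∀ a b : G, a * b = b * a) ∧ ∀ g : G, g ^ r = 1 := by
  simp [lam, ← le_bot_iff, commutator_def, commutator_le, commutatorElement_eq_one_iff_mul_comm,
    closure_le, Set.subset_def]

theorem lam_quotient_lam_eq_bot : lam r (G ⧸ lam r G) = ⊥ := by
  refine (lam_eq_bot_iff r).mpr ⟨fun a b => ?_, fun g => ?_⟩
  · exact (Normal.quotient_commutative_iff_commutator_le.mpr (commutator_le_lam r)).1.1 a b
  · induction g using QuotientGroup.induction_on with | H g =>
    rw [← QuotientGroup.mk_pow, QuotientGroup.eq_one_iff]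
    exact pow_mem_lam r g

end Lam

theorem exists_linearEquiv_fin_pi (K V : Type*) [Field K] [AddCommGroup V] [Module K V]
    [Finite V] : ∃ n, Nonempty (V ≃ₗ[K] (Fin n → K)) :=
  ⟨_, ⟨(Module.finBasis K V).equivFun⟩⟩

theorem exists_mulEquiv_pi_zmod_of_lam_eq_bot {r : ℕ} [Fact r.Prime] {G : Type*} [Group G]
    [Finite G] (h : lam r G = ⊥) : ∃ n, Nonempty (G ≃* Multiplicative (Fin n → ZMod r)) := by
  obtain ⟨hcomm, hpow⟩ := (lam_eq_bot_iff r).mp h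
  let _ : CommGroup G := { mul_comm := hcomm }
  let _ : Module (ZMod r) (Additive G) := AddCommGroup.zmodModule fun g => hpow g.toMul
  obtain ⟨n, ⟨e⟩⟩ := exists_linearEquiv_fin_pi (ZMod r) (Additive G)
  exact ⟨n, ⟨AddEquiv.toMultiplicativeRight e.toAddEquiv⟩⟩

theorem card_multiplicative_pi_zmod (r n : ℕ) [NeZero r] :
    Nat.card (Multiplicative (Fin n → ZMod r)) = r ^ n := by
  simp [Nat.card_eq_fintype_card]

/-- If `p ≠ q` are primes and `H` is a finite group with `λ_q(λ_p(H))` trivial, then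
`H` is isomorphic to `(ℤ/qℤ)^n ⋊ (ℤ/pℤ)^m` for some `n, m` and some action. -/
theorem stmt_5 (p q : ℕ) (hp : p.Prime) (hq : q.Prime) (hpq : p ≠ q)
    (H : Type*) [Group H] [Finite H]
    (h : lam q ↥(lam p H) = ⊥) :
    ∃ (n m : ℕ)
      (ρ : Multiplicative (Fin m → ZMod p) →* MulAut (Multiplicative (Fin n → ZMod q))),
      Nonempty (H ≃* (Multiplicative (Fin n → ZMod q)) ⋊[ρ] Multiplicative (Fin m → ZMod p)) := by
  have : Fact p.Prime := ⟨hp⟩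
  have : Fact q.Prime := ⟨hq⟩
  obtain ⟨n, ⟨eN⟩⟩ := exists_mulEquiv_pi_zmod_of_lam_eq_bot h
  obtain ⟨m, ⟨eQ⟩⟩ := exists_mulEquiv_pi_zmod_of_lam_eq_bot (lam_quotient_lam_eq_bot p (G := H))
  have hcop : (Nat.card (lam p H)).Coprime (lam p H).index := by
    rw [index_eq_card, Nat.card_congr eN.toEquiv, Nat.card_congr eQ.toEquiv,
      card_multiplicative_pi_zmod, card_multiplicative_pi_zmod]
    exact ((Nat.coprime_primes hq hp).mpr hpq.symm).pow n m
  obtain ⟨K, hK⟩ := exists_right_complement'_of_coprime hcop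
  exact ⟨n, m, _, ⟨(SemidirectProduct.mulEquivSubgroup hK).symm.trans
    (SemidirectProduct.congr' eN (hK.symm.QuotientMulEquiv.symm.trans eQ))⟩⟩
end

section
/- Let p, q be distinct primes and let H = (Z/qZ)^n ⋊_ρ (Z/pZ)^m for an action ρ : (Z/pZ)^m → GL_n(Z/qZ). Then H has a quotient isomorphic to Z/qZ if and only if the trivial representation occurs as a subrepresentation of ρ (i.e., there is a nonzero vector in (Z/qZ)^n fixed by the whole image of ρ). -/
/-!
A homomorphism from `N ⋊ G` to a group of prime order `q` kills `G`, whose order is prime to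
`q`, so surjections onto `ℤ/qℤ` are the same as `ρ`-invariant surjections `ψ` out of `N`. The
norm map `x ↦ ∏ g, ρ g x` lands in the fixed vectors and turns `ψ x` into `ψ x ^ |G|`, and
`|G|` is invertible mod `q`: applied to `x` with `ψ x ≠ 1` it gives a nontrivial fixed vector.
Conversely, composing a coordinate `χ` with `χ v ≠ 1` with the norm map gives an invariant `ψ`
with `ψ v = χ v ^ |G| ≠ 1`, which extends to `N ⋊ G` trivially on `G`.
-/

open Finset

theorem MonoidHom.eq_one_of_coprime_card {G M : Type*} [Group G] [Group M] (f : G →* M)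
    (h : (Nat.card G).Coprime (Nat.card M)) (g : G) : f g = 1 :=
  orderOf_eq_one_iff.mp <| Nat.eq_one_of_dvd_coprimes h
    ((orderOf_map_dvd f g).trans (orderOf_dvd_natCard g)) (orderOf_dvd_natCard (f g))

theorem pow_ne_one_of_coprime_card {M : Type*} [Group M] {x : M} (hx : x ≠ 1) {k : ℕ}
    (hk : (Nat.card M).Coprime k) : x ^ k ≠ 1 := fun h =>
  hx <| hk.pow_left_bijective.injective (by rw [h, one_pow])

theorem MonoidHom.surjective_of_prime_card {N M : Type*} [Group N] [Group M] {q : ℕ}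
    [Fact q.Prime] (hM : Nat.card M = q) (ψ : N →* M) {x : N} (hx : ψ x ≠ 1) :
    Function.Surjective ψ := by
  intro y
  obtain ⟨k, rfl⟩ := Subgroup.mem_zpowers_iff.mp
    (zpowers_eq_top_of_prime_card hM hx ▸ Subgroup.mem_top y)
  exact ⟨x ^ k, map_zpow ψ x k⟩

section OrbitProduct

variable {G N : Type*} [Group G] [Fintype G] [CommGroup N] (ρ : G →* MulAut N)

-- The norm map of group cohomology, written multiplicatively.
def orbitProd : N →* N := ∏ g, (ρ g).toMonoidHom

theorem orbitProd_apply (x : N) : orbitProd ρ x = ∏ g, ρ g x :=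
  MonoidHom.finsetProd_apply _ _ _

theorem orbitProd_aut (g : G) (x : N) : orbitProd ρ (ρ g x) = orbitProd ρ x := by
  simp only [orbitProd_apply, ← MulAut.mul_apply, ← map_mul]
  exact Fintype.prod_equiv (Equiv.mulRight g) _ _ fun _ => rfl

theorem aut_orbitProd (g : G) (x : N) : ρ g (orbitProd ρ x) = orbitProd ρ x := by
  simp only [orbitProd_apply, map_prod, ← MulAut.mul_apply, ← map_mul]
  exact Fintype.prod_equiv (Equiv.mulLeft g) _ _ fun _ => rfl

theorem orbitProd_of_fixed {v : N} (hv : ∀ g, ρ g v = v) :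
    orbitProd ρ v = v ^ Fintype.card G := by
  simp only [orbitProd_apply, hv, prod_const, card_univ]

theorem map_orbitProd_of_invariant {M : Type*} [CommMonoid M] (ψ : N →* M)
    (hψ : ∀ g x, ψ (ρ g x) = ψ x) (x : N) : ψ (orbitProd ρ x) = ψ x ^ Fintype.card G := by
  simp only [orbitProd_apply, map_prod, hψ, prod_const, card_univ]

end OrbitProduct

namespace SemidirectProduct

variable {N G M : Type*} [Group N] [Group G] [CommGroup M] {φ : G →* MulAut N}

theorem map_inl_aut (f : N ⋊[φ] G →* M) (g : G) (x : N) : f (inl (φ g x)) = f (inl x) := by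
  rw [inl_aut, map_mul, map_mul, map_inv, map_inv, mul_inv_cancel_comm]

theorem surjective_comp_inl {f : N ⋊[φ] G →* M} (hf : Function.Surjective f)
    (hinr : ∀ g, f (inr g) = 1) : Function.Surjective (f.comp inl) := by
  intro y
  obtain ⟨z, rfl⟩ := hf y
  refine ⟨z.left, ?_⟩
  rw [MonoidHom.comp_apply, ← mul_one (f (inl z.left)), ← hinr z.right, ← map_mul,
    inl_left_mul_inr_right]

end SemidirectProduct

section FixedVector

variable {N G M : Type*} [CommGroup N] [Group G] [Fintype G] [CommGroup M] {q : ℕ}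
  [hq : Fact q.Prime] (ρ : G →* MulAut N)

theorem exists_fixed_ne_one_of_surjective (hM : Nat.card M = q)
    (hG : (Fintype.card G).Coprime q) {f : N ⋊[ρ] G →* M} (hf : Function.Surjective f) :
    ∃ v ≠ 1, ∀ g, ρ g v = v := by
  have hGM : (Nat.card G).Coprime (Nat.card M) := by rwa [Nat.card_eq_fintype_card, hM]
  have hψ : Function.Surjective (f.comp SemidirectProduct.inl) :=
    SemidirectProduct.surjective_comp_inl hf
      ((f.comp SemidirectProduct.inr).eq_one_of_coprime_card hGM)
  have : Finite M := Nat.finite_of_card_ne_zero (hM ▸ hq.out.ne_zero)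
  have : Nontrivial M := Finite.one_lt_card_iff_nontrivial.mp (hM ▸ hq.out.one_lt)
  obtain ⟨y, hy⟩ := exists_ne (1 : M)
  obtain ⟨x, rfl⟩ := hψ y
  refine ⟨orbitProd ρ x, fun h => ?_, fun g => aut_orbitProd ρ g x⟩
  have hψv := map_orbitProd_of_invariant ρ (f.comp SemidirectProduct.inl)
    (SemidirectProduct.map_inl_aut f) x
  rw [h, map_one, eq_comm] at hψv
  exact pow_ne_one_of_coprime_card hy (hM ▸ hG.symm) hψv

theorem exists_surjective_of_fixed_ne_one (hM : Nat.card M = q)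
    (hG : (Fintype.card G).Coprime q) {v : N} (hfix : ∀ g, ρ g v = v)
    {χ : N →* M} (hχ : χ v ≠ 1) : ∃ f : N ⋊[ρ] G →* M, Function.Surjective f := by
  set ψ := χ.comp (orbitProd ρ)
  have hψv : ψ v ≠ 1 := by
    rw [MonoidHom.comp_apply, orbitProd_of_fixed ρ hfix, map_pow]
    exact pow_ne_one_of_coprime_card hχ (hM ▸ hG.symm)
  refine ⟨SemidirectProduct.lift ψ 1 fun g => MonoidHom.ext fun x => ?_, ?_⟩
  · simp [ψ, orbitProd_aut]
  · exact MonoidHom.surjective_of_prime_card hM _ (x := SemidirectProduct.inl v) (by simpa)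

end FixedVector

/-- Let `p ≠ q` be primes and `H = (ℤ/qℤ)^n ⋊_ρ (ℤ/pℤ)^m`. Then `H` has a quotient
isomorphic to `ℤ/qℤ` if and only if the trivial representation occurs as a
subrepresentation of `ρ`, i.e. there is a nonzero vector fixed by the whole action. -/
theorem stmt_6 (p q : ℕ) (hp : p.Prime) (hq : q.Prime) (hpq : p ≠ q) (n m : ℕ)
    (ρ : Multiplicative (Fin m → ZMod p) →* MulAut (Multiplicative (Fin n → ZMod q))) :
    (∃ f : (Multiplicative (Fin n → ZMod q)) ⋊[ρ] Multiplicative (Fin m → ZMod p) →*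
        Multiplicative (ZMod q), Function.Surjective f) ↔
      (∃ v : Fin n → ZMod q, v ≠ 0 ∧
        ∀ g : Multiplicative (Fin m → ZMod p),
          ρ g (Multiplicative.ofAdd v) = Multiplicative.ofAdd v) := by
  have : Fact p.Prime := ⟨hp⟩
  have : Fact q.Prime := ⟨hq⟩
  have hM : Nat.card (Multiplicative (ZMod q)) = q := by simp
  have hG : (Fintype.card (Multiplicative (Fin m → ZMod p))).Coprime q := by
    simpa using ((Nat.coprime_primes hp hq).2 hpq).pow_left m
  constructor
  · rintro ⟨f, hf⟩
    obtain ⟨v, hv, hfix⟩ := exists_fixed_ne_one_of_surjective ρ hM hG hf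
    exact ⟨v.toAdd, toAdd_eq_zero.not.mpr hv, hfix⟩
  · rintro ⟨v, hv, hfix⟩
    obtain ⟨i, hi⟩ := Function.ne_iff.mp hv
    exact exists_surjective_of_fixed_ne_one ρ hM hG hfix
      (χ := (Pi.evalAddMonoidHom (fun _ => ZMod q) i).toMultiplicative) (by simpa using hi)
end

section
/- For distinct primes p, q, every nontrivial irreducible F_q-linear representation of the group (Z/pZ)^m factors as ρ_{p,q} ∘ π for some surjective homomorphism π : (Z/pZ)^m → Z/pZ, where ρ_{p,q} : Z/pZ → F_q(ζ_p)^× is the representation sending i to ζ_p^i for a fixed primitive p-th root of unity ζ_p in an extension of F_q. -/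
/-!
An irreducible representation of the commutative group algebra `𝔽_q[G]` is a field quotient
`𝔽_q[G]/𝔪`. As `G = (ℤ/pℤ)^m` has exponent `p` and acts nontrivially, this field is generated
over `𝔽_q` by `p`-th roots of unity, one of them primitive, so it is the `p`-th cyclotomic
extension of `𝔽_q`, and hence isomorphic to `K = 𝔽_q(ζ)`. Transported to `K`, each `g ∈ G`
acts by a `p`-th root of unity, i.e. by `ζ ^ π(g)`; the discrete logarithm `π` is additive, and
nonzero, hence surjective, because the action is nontrivial.
-/

open scoped MonoidAlgebra

namespace Representation

variable {k G V : Type*} [Field k] [AddCommGroup V] [Module k V]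

theorem isIrreducible_of_forall_invariant [Monoid G] [Nontrivial V] {ρ : Representation k G V}
    (hirr : ∀ W : Submodule k V, (∀ (g : G) (w : V), w ∈ W → ρ g w ∈ W) → W = ⊥ ∨ W = ⊤) :
    ρ.IsIrreducible where
  exists_pair_ne := ⟨⊥, ⊤, fun h => bot_ne_top (congrArg Subrepresentation.toSubmodule h)⟩
  eq_bot_or_eq_top σ :=
    (hirr σ.toSubmodule fun g _ hw => σ.apply_mem_toSubmodule g hw).imp
      Subrepresentation.ext Subrepresentation.ext

theorem IsIrreducible.exists_linearEquiv_quotient [CommMonoid G] {ρ : Representation k G V}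
    [ρ.IsIrreducible] :
    ∃ I : Ideal k[G], I.IsMaximal ∧ ∃ e : V ≃ₗ[k] k[G] ⧸ I,
      ∀ (g : G) (v : V), e (ρ g v) = Ideal.Quotient.mk I (MonoidAlgebra.of k G g) * e v := by
  obtain ⟨I, hI, ⟨e⟩⟩ := isSimpleModule_iff_quot_maximal.mp (inferInstance :
    IsSimpleModule k[G] ρ.asModule)
  refine ⟨I, hI, ρ.asModuleEquiv.symm.trans (e.restrictScalars k), fun g v => ?_⟩
  simp only [LinearEquiv.trans_apply, LinearEquiv.restrictScalars_apply,
    asModuleEquiv_symm_map_rho, map_smul]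
  exact Algebra.smul_def (A := k[G] ⧸ I) _ _

end Representation

theorem IsCyclotomicExtension.of_adjoin_eq_top {k L : Type*} [CommRing k] [CommRing L]
    [Algebra k L] {p : ℕ} [NeZero p] {s : Set L} (hs : Algebra.adjoin k s = ⊤)
    (hsp : ∀ x ∈ s, x ^ p = 1) {ζ : L} (hζ : IsPrimitiveRoot ζ p) :
    IsCyclotomicExtension {p} k L :=
  (iff_singleton p k L).mpr ⟨⟨ζ, hζ⟩, fun x => Algebra.adjoin_mono hsp (Algebra.eq_top_iff.mp hs x)⟩

theorem MonoidAlgebra.adjoin_range_of (k G : Type*) [CommSemiring k] [Monoid G] :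
    Algebra.adjoin k (Set.range (of k G)) = ⊤ :=
  Algebra.eq_top_iff.mpr fun f => Algebra.adjoin_mono (Set.image_subset_range _ _)
    (mem_adjoin_support f)

theorem IsCyclotomicExtension.of_surjective_monoidAlgebra {k G L : Type*} [CommRing k]
    [Monoid G] [Field L] [Algebra k L] {p : ℕ} [Fact p.Prime] (φ : k[G] →ₐ[k] L)
    (hφ : Function.Surjective φ) (hG : ∀ g : G, g ^ p = 1) {g₀ : G}
    (hg₀ : φ (MonoidAlgebra.of k G g₀) ≠ 1) : IsCyclotomicExtension {p} k L := by
  have hroot : ∀ g : G, φ (MonoidAlgebra.of k G g) ^ p = 1 := fun g => by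
    rw [← map_pow, ← map_pow, hG, map_one, map_one]
  refine of_adjoin_eq_top (s := Set.range fun g => φ (MonoidAlgebra.of k G g)) ?_
    (Set.forall_mem_range.mpr hroot)
    (IsPrimitiveRoot.iff_orderOf.mpr (orderOf_eq_prime (hroot g₀) hg₀))
  rw [Set.range_comp', ← AlgHom.map_adjoin, MonoidAlgebra.adjoin_range_of, Algebra.map_top,
    (AlgHom.range_eq_top φ).mpr hφ]

namespace IsPrimitiveRoot

variable {M : Type*} [CommMonoid M] {p : ℕ} {ζ : M}

theorem pow_mod (hζ : IsPrimitiveRoot ζ p) (n : ℕ) : ζ ^ (n % p) = ζ ^ n := by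
  rw [hζ.eq_orderOf, pow_mod_orderOf]

variable [NeZero p]

theorem pow_val_injective (hζ : IsPrimitiveRoot ζ p) :
    Function.Injective fun i : ZMod p => ζ ^ i.val :=
  fun i j hij => ZMod.val_injective p (hζ.pow_inj (ZMod.val_lt i) (ZMod.val_lt j) hij)

theorem pow_val_add (hζ : IsPrimitiveRoot ζ p) (i j : ZMod p) :
    ζ ^ (i + j).val = ζ ^ i.val * ζ ^ j.val := by
  rw [ZMod.val_add, hζ.pow_mod, pow_add]

theorem exists_addMonoidHom_eq_pow_val {R A : Type*} [CommRing R] [IsDomain R] [AddMonoid A]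
    {ζ : R} (hζ : IsPrimitiveRoot ζ p) (χ : Multiplicative A →* R) (hχ : ∀ a, χ a ^ p = 1) :
    ∃ π : A →+ ZMod p, ∀ a, χ (Multiplicative.ofAdd a) = ζ ^ (π a).val := by
  have hlog : ∀ a, ∃ i : ZMod p, χ (Multiplicative.ofAdd a) = ζ ^ i.val := fun a => by
    obtain ⟨i, -, hi⟩ := hζ.eq_pow_of_pow_eq_one (hχ _)
    exact ⟨i, by rw [← hi, ZMod.val_natCast, hζ.pow_mod]⟩
  choose π hπ using hlog
  refine ⟨AddMonoidHom.mk' π fun a b => hζ.pow_val_injective ?_, hπ⟩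
  simp only [hζ.pow_val_add, ← hπ, ofAdd_add, map_mul]

end IsPrimitiveRoot

theorem ZMod.addMonoidHom_surjective_of_ne_zero {A : Type*} [AddMonoid A] {p : ℕ} [Fact p.Prime]
    {π : A →+ ZMod p} (hπ : π ≠ 0) : Function.Surjective π := by
  obtain ⟨a, ha⟩ := DFunLike.ne_iff.mp hπ
  intro b
  refine ⟨(b * (π a)⁻¹).val • a, ?_⟩
  rw [map_nsmul, nsmul_eq_mul, ZMod.natCast_zmod_val, inv_mul_cancel_right₀ ha]

theorem stmt_8_general (p q : ℕ) (hp : p.Prime) (hq : q.Prime) (m : ℕ)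
    (K : Type*) [Field K] [Algebra (ZMod q) K]
    (ζ : K) (hζ : orderOf ζ = p) (hgen : Algebra.adjoin (ZMod q) {ζ} = ⊤)
    (V : Type*) [AddCommGroup V] [Module (ZMod q) V]
    (ρ : Representation (ZMod q) (Multiplicative (Fin m → ZMod p)) V)
    (hnontriv : ∃ (g : Multiplicative (Fin m → ZMod p)) (v : V), ρ g v ≠ v)
    (hirr : ∀ W : Submodule (ZMod q) V,
      (∀ (g : Multiplicative (Fin m → ZMod p)) (w : V), w ∈ W → ρ g w ∈ W) →
      W = ⊥ ∨ W = ⊤) :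
    ∃ π : (Fin m → ZMod p) →+ ZMod p, Function.Surjective π ∧
      ∃ f : V ≃ₗ[ZMod q] K, ∀ (g : Multiplicative (Fin m → ZMod p)) (v : V),
        f (ρ g v) = ζ ^ (π (Multiplicative.toAdd g)).val * f v := by
  have : Fact p.Prime := ⟨hp⟩
  have : Fact q.Prime := ⟨hq⟩
  obtain ⟨g₀, v₀, hg₀⟩ := hnontriv
  have : Nontrivial V := ⟨⟨ρ g₀ v₀, v₀, hg₀⟩⟩
  have := Representation.isIrreducible_of_forall_invariant hirr
  obtain ⟨I, hI, e, he⟩ := Representation.IsIrreducible.exists_linearEquiv_quotient (ρ := ρ)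
  let := Ideal.Quotient.field I
  have hexp : ∀ g : Multiplicative (Fin m → ZMod p), g ^ p = 1 := fun g => by
    ext i
    simp only [toAdd_pow, Pi.smul_apply, nsmul_eq_mul, CharP.cast_eq_zero, zero_mul, toAdd_one,
      Pi.zero_apply]
  have hu₀ : Ideal.Quotient.mkₐ (ZMod q) I (MonoidAlgebra.of (ZMod q) _ g₀) ≠ 1 := fun h =>
    hg₀ (e.injective (by rw [he]; exact (congrArg (· * e v₀) h).trans (one_mul _)))
  have := IsCyclotomicExtension.of_surjective_monoidAlgebra _
    (Ideal.Quotient.mkₐ_surjective (ZMod q) I) hexp hu₀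
  have hprim : IsPrimitiveRoot ζ p := hζ ▸ IsPrimitiveRoot.orderOf ζ
  have := IsCyclotomicExtension.of_adjoin_eq_top hgen (by simp [hprim.pow_eq_one]) hprim
  let ψ := IsCyclotomicExtension.algEquiv {p} (ZMod q) (_ ⧸ I) K
  let χ := ((ψ : _ →ₐ[ZMod q] K).comp (Ideal.Quotient.mkₐ (ZMod q) I)).toMonoidHom.comp
    (MonoidAlgebra.of (ZMod q) _)
  obtain ⟨π, hπ⟩ := hprim.exists_addMonoidHom_eq_pow_val χ fun g => by
    rw [← map_pow, hexp, map_one]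
  refine ⟨π, ZMod.addMonoidHom_surjective_of_ne_zero ?_, e.trans ψ.toLinearEquiv, fun g v => ?_⟩
  · exact fun h => hu₀ (ψ.injective (by simpa [h, χ] using hπ (Multiplicative.toAdd g₀)))
  · show ψ (e (ρ g v)) = _
    rw [he, map_mul, ← hπ]
    rfl

/-- For distinct primes `p, q`, every nontrivial irreducible `𝔽_q`-linear representation of
`(ℤ/pℤ)^m` is isomorphic to `ρ_{p,q} ∘ π` for some surjective homomorphism
`π : (ℤ/pℤ)^m → ℤ/pℤ`, where `ρ_{p,q}` is the representation of `ℤ/pℤ` on `𝔽_q(ζ_p)`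
given by multiplication by a primitive `p`-th root of unity `ζ_p`. -/
theorem stmt_8 (p q : ℕ) (hp : p.Prime) (hq : q.Prime) (hpq : p ≠ q) (m : ℕ)
    (K : Type*) [Field K] [Algebra (ZMod q) K]
    (ζ : K) (hζ : orderOf ζ = p) (hgen : Algebra.adjoin (ZMod q) {ζ} = ⊤)
    (V : Type*) [AddCommGroup V] [Module (ZMod q) V]
    (ρ : Representation (ZMod q) (Multiplicative (Fin m → ZMod p)) V)
    (hnontriv : ∃ (g : Multiplicative (Fin m → ZMod p)) (v : V), ρ g v ≠ v)
    (hirr : ∀ W : Submodule (ZMod q) V,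
      (∀ (g : Multiplicative (Fin m → ZMod p)) (w : V), w ∈ W → ρ g w ∈ W) →
      W = ⊥ ∨ W = ⊤) :
    ∃ π : (Fin m → ZMod p) →+ ZMod p, Function.Surjective π ∧
      ∃ f : V ≃ₗ[ZMod q] K, ∀ (g : Multiplicative (Fin m → ZMod p)) (v : V),
        f (ρ g v) = ζ ^ (π (Multiplicative.toAdd g)).val * f v :=
  stmt_8_general p q hp hq m K ζ hζ hgen V ρ hnontriv hirr
end

section
/- The polynomial 3x⁴ + 6sx² − s² ∈ Q[x] is irreducible over Q for every nonzero rational number s. -/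
open Polynomial

lemma aux_isUnit_of_mirror {K : Type*} [Field K] {q : K[X]} (h : IsUnit q.mirror) : IsUnit q := by
  rw [isUnit_iff_degree_eq_zero] at h ⊢
  have hq0 : q ≠ 0 := by
    rintro rfl; simp [mirror_zero] at h
  rw [degree_eq_natDegree hq0]
  rw [degree_eq_natDegree (by simp [mirror_eq_zero, hq0])] at h
  rw [mirror_natDegree] at h
  exact_mod_cast h

lemma aux_irreducible_mirror {K : Type*} [Field K] {p : K[X]} (hp : Irreducible p) :
    Irreducible p.mirror := by
  constructor
  · intro h
    exact hp.not_isUnit (aux_isUnit_of_mirror h)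
  · intro a b hab
    have h : p = a.mirror * b.mirror := by
      rw [← mirror_mul_of_domain, ← hab, mirror_mirror]
    rcases hp.isUnit_or_isUnit h with h' | h'
    · exact Or.inl (aux_isUnit_of_mirror h')
    · exact Or.inr (aux_isUnit_of_mirror h')

lemma aux_prime3 : Prime (3 : ℤ) := by
  rw [Int.prime_iff_natAbs_prime]; norm_num

lemma aux_E1 (t : ℤ) (ht : t ≠ 0) (ht3 : ¬ (3:ℤ) ∣ t) :
    Irreducible ((X ^ 4 + C (6 * t) * X ^ 2 - C (3 * t ^ 2)) : ℤ[X]) := by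
  have hmon : ((X ^ 4 + C (6 * t) * X ^ 2 - C (3 * t ^ 2)) : ℤ[X]).Monic := by
    monicity!
  have hdeg : ((X ^ 4 + C (6 * t) * X ^ 2 - C (3 * t ^ 2)) : ℤ[X]).degree = 4 := by
    compute_degree!
  apply irreducible_of_eisenstein_criterion
    (Ideal.span_singleton_prime (by norm_num : (3:ℤ) ≠ 0) |>.mpr aux_prime3)
  · rw [hmon.leadingCoeff, Ideal.mem_span_singleton]
    norm_num
  · intro n hn
    rw [hdeg] at hn
    rw [Ideal.mem_span_singleton]
    have hn4 : n < 4 := by exact_mod_cast hn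
    interval_cases n <;>
      · simp only [coeff_add, coeff_sub, coeff_C_mul, coeff_X_pow, coeff_C]
        norm_num
        try omega
  · rw [hdeg]; norm_num
  · rw [Ideal.span_singleton_pow, Ideal.mem_span_singleton]
    simp only [coeff_add, coeff_sub, coeff_C_mul, coeff_X_pow, coeff_C]
    norm_num
    intro h9d
    obtain ⟨c, hc⟩ := h9d
    apply ht3
    apply aux_prime3.dvd_of_dvd_pow (n := 2)
    omega
  · exact hmon.isPrimitive

lemma aux_E2_prim (u : ℤ) (hu3 : ¬ (3:ℤ) ∣ u) :
    IsPrimitive ((C (u ^ 2) * X ^ 4 - C (6 * u) * X ^ 2 - C 3) : ℤ[X]) := by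
  intro r hr
  rw [C_dvd_iff_dvd_coeff] at hr
  have h4 := hr 4
  have h0 := hr 0
  simp only [coeff_sub, coeff_C_mul, coeff_X_pow, coeff_C] at h4 h0
  norm_num at h4 h0
  have h0' : r ∣ (3:ℤ) := (dvd_neg.mp h0.neg_right)
  have hr3 : r.natAbs ∣ 3 := by
    have := Int.natAbs_dvd_natAbs.mpr h0'
    simpa using this
  rcases (Nat.dvd_prime Nat.prime_three).mp hr3 with h | h
  · exact Int.isUnit_iff.mpr (by omega)
  · exfalso
    apply hu3
    apply aux_prime3.dvd_of_dvd_pow (n := 2)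
    have : (3:ℤ) ∣ r := by
      rcases Int.natAbs_eq r with he | he <;> rw [he, h] <;> norm_num
    exact this.trans h4

lemma aux_E2 (u : ℤ) (hu : u ≠ 0) (hu3 : ¬ (3:ℤ) ∣ u) :
    Irreducible ((C (u ^ 2) * X ^ 4 - C (6 * u) * X ^ 2 - C 3) : ℤ[X]) := by
  have hu2 : u ^ 2 ≠ 0 := pow_ne_zero 2 hu
  have hdeg : ((C (u ^ 2) * X ^ 4 - C (6 * u) * X ^ 2 - C 3) : ℤ[X]).degree = 4 := by
    compute_degree!
  have hlead : ((C (u ^ 2) * X ^ 4 - C (6 * u) * X ^ 2 - C 3) : ℤ[X]).leadingCoeff = u ^ 2 := by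
    rw [leadingCoeff, natDegree_eq_of_degree_eq_some hdeg]
    simp only [coeff_sub, coeff_C_mul, coeff_X_pow, coeff_C]
    norm_num
  apply irreducible_of_eisenstein_criterion
    (Ideal.span_singleton_prime (by norm_num : (3:ℤ) ≠ 0) |>.mpr aux_prime3)
  · rw [hlead, Ideal.mem_span_singleton]
    intro h
    exact hu3 (aux_prime3.dvd_of_dvd_pow h)
  · intro n hn
    rw [hdeg] at hn
    rw [Ideal.mem_span_singleton]
    have hn4 : n < 4 := by exact_mod_cast hn
    interval_cases n <;>
      · simp only [coeff_sub, coeff_C_mul, coeff_X_pow, coeff_C]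
        norm_num
        try omega
  · rw [hdeg]; norm_num
  · rw [Ideal.span_singleton_pow, Ideal.mem_span_singleton]
    simp only [coeff_sub, coeff_C_mul, coeff_X_pow, coeff_C]
    norm_num
  · exact aux_E2_prim u hu3


lemma aux_key (v : ℤ) (hv : v ≠ 0) (h9 : ¬ (9:ℤ) ∣ v) :
    Irreducible ((C 3 * X ^ 4 + C (6 * (v:ℚ)) * X ^ 2 - C ((v:ℚ) ^ 2)) : ℚ[X]) := by
  by_cases h3 : (3:ℤ) ∣ v
  · obtain ⟨t, rfl⟩ := h3
    have ht : t ≠ 0 := by rintro rfl; simp at hv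
    have ht3 : ¬ (3:ℤ) ∣ t := fun ⟨c, hc⟩ => h9 ⟨c, by omega⟩
    have h1 := aux_E1 t ht ht3
    have h2 : Irreducible (((X ^ 4 + C (6 * t) * X ^ 2 - C (3 * t ^ 2)) : ℤ[X]).map
        (Int.castRingHom ℚ)) := by
      rw [← IsPrimitive.Int.irreducible_iff_irreducible_map_cast]
      · exact h1
      · have hmon : ((X ^ 4 + C (6 * t) * X ^ 2 - C (3 * t ^ 2)) : ℤ[X]).Monic := by monicity!
        exact hmon.isPrimitive
    have heq : ((C 3 * X ^ 4 + C (6 * ((3*t : ℤ):ℚ)) * X ^ 2 - C (((3*t:ℤ):ℚ) ^ 2)) : ℚ[X])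
        = C 3 * (((X ^ 4 + C (6 * t) * X ^ 2 - C (3 * t ^ 2)) : ℤ[X]).map (Int.castRingHom ℚ)) := by
      simp only [Polynomial.map_add, Polynomial.map_sub, Polynomial.map_mul, Polynomial.map_pow,
        Polynomial.map_X, Polynomial.map_C, eq_intCast, Polynomial.map_intCast, Polynomial.map_ofNat]
      push_cast
      simp only [C_mul, C_pow, C_eq_intCast, map_ofNat]
      all_goals push_cast
      all_goals ring
    rw [heq]
    exact (irreducible_isUnit_mul (isUnit_C.mpr (by norm_num))).mpr h2
  · have h1 := aux_E2 v hv h3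
    have h2 : Irreducible (((C (v ^ 2) * X ^ 4 - C (6 * v) * X ^ 2 - C 3) : ℤ[X]).map
        (Int.castRingHom ℚ)) := by
      rw [← IsPrimitive.Int.irreducible_iff_irreducible_map_cast]
      · exact h1
      · exact aux_E2_prim v h3
    have hQ : (((C (v ^ 2) * X ^ 4 - C (6 * v) * X ^ 2 - C 3) : ℤ[X]).map (Int.castRingHom ℚ))
        = (C ((v:ℚ) ^ 2) * X ^ 4 - C (6 * (v:ℚ)) * X ^ 2 - C 3 : ℚ[X]) := by
      simp only [Polynomial.map_sub, Polynomial.map_mul, Polynomial.map_pow,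
        Polynomial.map_X, Polynomial.map_C, eq_intCast, Polynomial.map_intCast, Polynomial.map_ofNat]
      push_cast
      simp only [C_mul, C_pow, C_eq_intCast, map_ofNat]
      all_goals push_cast
      all_goals ring
    rw [hQ] at h2
    have hv2 : ((v:ℚ)) ^ 2 ≠ 0 := pow_ne_zero 2 (Int.cast_ne_zero.mpr hv)
    have hdeg : (C ((v:ℚ) ^ 2) * X ^ 4 - C (6 * (v:ℚ)) * X ^ 2 - C 3 : ℚ[X]).natDegree = 4 := by
      compute_degree!
    have hntd : (C ((v:ℚ) ^ 2) * X ^ 4 - C (6 * (v:ℚ)) * X ^ 2 - C 3 : ℚ[X]).natTrailingDegree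
        = 0 := by
      rw [natTrailingDegree_eq_zero]
      right
      simp only [coeff_sub, coeff_C_mul, coeff_X_pow, coeff_C]
      norm_num
    have hmir : (C ((v:ℚ) ^ 2) * X ^ 4 - C (6 * (v:ℚ)) * X ^ 2 - C 3 : ℚ[X]).mirror
        = -(C 3 * X ^ 4 + C (6 * (v:ℚ)) * X ^ 2 - C ((v:ℚ) ^ 2)) := by
      rw [mirror, hntd, pow_zero, mul_one, reverse, hdeg]
      rw [reflect_sub, reflect_sub, reflect_C_mul_X_pow, reflect_C_mul_X_pow, reflect_C]
      rw [show revAt 4 4 = 0 from rfl, show revAt 4 2 = 2 from rfl]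
      ring
    have := aux_irreducible_mirror h2
    rw [hmir] at this
    rw [show (C 3 * X ^ 4 + C (6 * (v:ℚ)) * X ^ 2 - C ((v:ℚ) ^ 2) : ℚ[X])
      = -1 * -(C 3 * X ^ 4 + C (6 * (v:ℚ)) * X ^ 2 - C ((v:ℚ) ^ 2)) from by ring]
    exact (irreducible_isUnit_mul isUnit_one.neg).mpr this


/-- The polynomial `3x⁴ + 6sx² − s²` is irreducible over `ℚ` for every nonzero `s ∈ ℚ`. -/
theorem stmt_14 (s : ℚ) (hs : s ≠ 0) :
    Irreducible (C 3 * X ^ 4 + C (6 * s) * X ^ 2 - C (s ^ 2) : ℚ[X]) := by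
  haveI : Fact (Nat.Prime 3) := ⟨by norm_num⟩
  have hn : (s.num : ℤ) ≠ 0 := Rat.num_ne_zero.mpr hs
  have hd : ((s.den : ℤ)) ≠ 0 := by positivity
  set m : ℤ := s.num * (s.den : ℤ) with hm_def
  have hm : m ≠ 0 := mul_ne_zero hn hd
  set k : ℕ := padicValInt 3 m with hk_def
  set j : ℕ := k / 2 with hj_def
  have hdvd : (3:ℤ) ^ (2*j) ∣ m := by
    rw [show ((3:ℤ)) = ((3:ℕ):ℤ) from rfl]
    exact (padicValInt_dvd_iff (2*j) m).mpr (Or.inr (by omega))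
  set v : ℤ := m / 3 ^ (2*j) with hv_def
  have hmv : (3:ℤ) ^ (2*j) * v = m := Int.mul_ediv_cancel' hdvd
  have hv : v ≠ 0 := by
    intro h; rw [h, mul_zero] at hmv; exact hm hmv.symm
  have h9 : ¬ (9:ℤ) ∣ v := by
    rintro ⟨c, hc⟩
    have : ((3:ℕ):ℤ) ^ (2*j+2) ∣ m := ⟨c, by push_cast; rw [← hmv, hc]; ring⟩
    have hle := (padicValInt_dvd_iff (2*j+2) m).mp this
    rcases hle with h | h
    · exact hm h
    · omega
  set w : ℚ := (3:ℚ) ^ j / (s.den : ℚ) with hw_def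
  have hdq : ((s.den : ℚ)) ≠ 0 := by positivity
  have hw : w ≠ 0 := div_ne_zero (by positivity) hdq
  have hcast : (v:ℚ) * (3:ℚ) ^ (2*j) = (s.num : ℚ) * (s.den : ℚ) := by
    have h2 := congrArg (fun z : ℤ => (z : ℚ)) hmv
    push_cast at h2
    have h3 : (m:ℚ) = (s.num:ℚ) * (s.den:ℚ) := by rw [hm_def]; push_cast; ring
    linear_combination h2 + h3
  have hsnd : s * (s.den : ℚ) = (s.num : ℚ) := Rat.mul_den_eq_num s
  have hs' : s = (v:ℚ) * w ^ 2 := by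
    rw [hw_def, div_pow, ← pow_mul, mul_div_assoc']
    rw [eq_comm, div_eq_iff (by positivity), show j * 2 = 2 * j from by ring]
    linear_combination hcast - (s.den : ℚ) * hsnd
  haveI : Invertible w := invertibleOfNonzero hw
  have heq : (algEquivCMulXAddC w 0) (C 3 * X ^ 4 + C (6 * s) * X ^ 2 - C (s ^ 2) : ℚ[X])
      = C (w ^ 4) * (C 3 * X ^ 4 + C (6 * (v:ℚ)) * X ^ 2 - C ((v:ℚ) ^ 2)) := by
    rw [algEquivCMulXAddC_apply]
    simp only [map_add, map_sub, map_mul, map_pow, aeval_X, aeval_C, algebraMap_eq, map_zero, add_zero, mul_zero]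
    rw [hs']
    simp only [C_mul, C_pow, map_ofNat]
    ring
  apply (MulEquiv.irreducible_iff (algEquivCMulXAddC w 0)).mp
  rw [heq]
  exact (irreducible_isUnit_mul (isUnit_C.mpr (pow_ne_zero 4 hw).isUnit)).mpr
    (aux_key v hv h9)
end

section
/- For every nonzero rational s, writing s = 3s', the quartic x⁴ + 6s'x² − 3s'² cannot be factored as a product of two monic quadratics with rational coefficients. -/
open Polynomial

lemma no_rat_sqrt_three (q : ℚ) : q ^ 2 ≠ 3 := by
  intro hq
  have h3 : Irrational (Real.sqrt 3) := by
    simpa using (Nat.prime_three).irrational_sqrt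
  apply h3
  refine ⟨|q|, ?_⟩
  have : Real.sqrt 3 = Real.sqrt ((q : ℝ) ^ 2) := by
    norm_num [show ((q:ℝ))^2 = 3 by exact_mod_cast congrArg (fun x : ℚ => (x : ℝ)) hq]
  rw [this, Real.sqrt_sq_eq_abs]
  push_cast
  ring

/-- For every nonzero rational `s`, writing `s = 3s'`, the quartic `x⁴ + 6s'x² − 3s'²`
is not a product of two monic quadratics with rational coefficients. -/
theorem stmt_15 (s s' : ℚ) (hs : s ≠ 0) (hs' : s = 3 * s') :
    ¬ ∃ a₁ a₂ b₁ b₂ : ℚ,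
      (X ^ 4 + C (6 * s') * X ^ 2 - C (3 * s' ^ 2) : ℚ[X]) =
        (X ^ 2 + C a₁ * X + C a₂) * (X ^ 2 + C b₁ * X + C b₂) := by
  rintro ⟨a₁, a₂, b₁, b₂, h⟩
  have hs'0 : s' ≠ 0 := by rintro rfl; simp at hs'; exact hs hs'
  have e0 := congrArg (fun p => Polynomial.eval 0 p) h
  have e1 := congrArg (fun p => Polynomial.eval 1 p) h
  have e2 := congrArg (fun p => Polynomial.eval (-1) p) h
  have e3 := congrArg (fun p => Polynomial.eval 2 p) h
  have e4 := congrArg (fun p => Polynomial.eval (-2) p) h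
  simp only [eval_add, eval_sub, eval_mul, eval_pow, eval_X, eval_C] at e0 e1 e2 e3 e4
  -- coefficient relations
  have hc3 : a₁ + b₁ = 0 := by linear_combination (e1 - e2) / 6 - (e3 - e4) / 12
  have hc1 : a₁ * b₂ + a₂ * b₁ = 0 := by
    linear_combination (e3 - e4) / 12 - 2 * (e1 - e2) / 3
  have hc2 : a₂ + b₂ + a₁ * b₁ = 6 * s' := by
    linear_combination e0 - (e1 + e2) / 2
  have hc0 : a₂ * b₂ = -(3 * s' ^ 2) := by linear_combination -e0
  have hb₁ : b₁ = -a₁ := by linarith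
  by_cases ha : a₁ = 0
  · -- a₁ = 0 : (a₂ - b₂)^2 = 48 s'^2, so (·/(4s'))^2 = 3
    subst ha hb₁
    have hsum : a₂ + b₂ = 6 * s' := by linarith [hc2]
    have hdiff : (a₂ - b₂) ^ 2 = 48 * s' ^ 2 := by linear_combination (a₂ + b₂ + 6 * s') * hsum - 4 * hc0
    have := no_rat_sqrt_three ((a₂ - b₂) / (4 * s'))
    apply this
    field_simp
    linear_combination hdiff
  · -- a₁ ≠ 0 : b₂ = a₂, so a₂^2 = -3 s'^2 < 0
    have hb₂ : b₂ = a₂ := by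
      have : a₁ * (b₂ - a₂) = 0 := by
        rw [hb₁] at hc1; linear_combination hc1
      rcases mul_eq_zero.mp this with h' | h'
      · exact absurd h' ha
      · linarith
    rw [hb₂] at hc0
    nlinarith [sq_nonneg a₂, sq_nonneg s', pow_pos (abs_pos.mpr hs'0) 2, sq_abs s']
end
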